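/- Let G be a simple graph on n ≥ 3 vertices with Sombor energy E(G) and forgotten index F. Then 2√F ≤ E(G) ≤ √(2nF). Equality in the upper bound holds if and only if G is the empty graph or a perfect matching (n/2)K_2; if G is connected, equality in the lower bound holds if and only if G is a complete bipartite graph K_{s,t} with s+t = n. -/

import Mathlib

open scoped Classical

noncomputable def somborMatrix {V : Type*} [Fintype V] (G : SimpleGraph V) :
    Matrix V V ℝ := fun i j =>
  if G.Adj i j then Real.sqrt ((G.degree i : ℝ) ^ 2 + (G.degree j : ℝ) ^ 2) else 0

lemma somborMatrix_isHermitian {V : Type*} [Fintype V] (G : SimpleGraph V) :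
    (somborMatrix G).IsHermitian := by
  apply Matrix.ext
  intro i j
  simp only [Matrix.conjTranspose_apply, star_trivial, somborMatrix]
  rw [G.adj_comm, add_comm]

/-- The Sombor eigenvalues of `G`. -/
noncomputable def somborEigs {V : Type*} [Fintype V] (G : SimpleGraph V) : V → ℝ :=
  (somborMatrix_isHermitian G).eigenvalues

/-- The Sombor spectral radius (largest Sombor eigenvalue). -/
noncomputable def somborSpecRad {V : Type*} [Fintype V] (G : SimpleGraph V) : ℝ :=
  ⨆ i, somborEigs G i

/-- The Sombor energy. -/
noncomputable def somborEnergy {V : Type*} [Fintype V] (G : SimpleGraph V) : ℝ :=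
  ∑ i, |somborEigs G i|

/-- The Sombor Estrada index. -/
noncomputable def somborEstrada {V : Type*} [Fintype V] (G : SimpleGraph V) : ℝ :=
  ∑ i, Real.exp (somborEigs G i)

/-- The forgotten topological index `F = ∑ d_i ^ 3`. -/
noncomputable def forgottenIndex {V : Type*} [Fintype V] (G : SimpleGraph V) : ℝ :=
  ∑ i, (G.degree i : ℝ) ^ 3

/-!
Write `ρᵢ` for the Sombor eigenvalues. The Sombor matrix `S` has zero diagonal, so
`∑ ρᵢ = tr S = 0`, while `∑ ρᵢ² = tr S² = 2F`.

The upper bound is Cauchy–Schwarz for the `|ρᵢ|`. Equality forces all `ρᵢ²` to be equal, i.e.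
`S² = c • 1`; since `S` is entrywise nonnegative with support `G`, this says that no two vertices
have a common neighbour and that all diagonal entries `∑_{j ~ i} (dᵢ² + dⱼ²)` agree.

For the lower bound let `P = ∑ ρᵢ⁺ = ∑ ρᵢ⁻`. Then `E = 2P` and
`2F = ∑ (ρᵢ⁺)² + ∑ (ρᵢ⁻)² ≤ 2P²`, with equality iff at most one eigenvalue is positive and at
most one is negative, i.e. iff `S = a aᵀ - b bᵀ` for some vectors `a`, `b`. The zero diagonal then
gives `bᵢ = ±aᵢ`, and `Sᵢⱼ ≠ 0` exactly when the signs of `i` and `j` differ.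
-/

open Matrix Unitary

namespace Finset

variable {ι : Type*} [Fintype ι]

lemma sq_sum_eq_card_mul_sum_sq_iff (f : ι → ℝ) :
    (∑ i, f i) ^ 2 = Fintype.card ι * ∑ i, f i ^ 2 ↔ ∀ i j, f i = f j := by
  have key : ∑ i, ∑ j, (f i - f j) ^ 2 =
      2 * (Fintype.card ι * ∑ i, f i ^ 2 - (∑ i, f i) ^ 2) := by
    simp only [sub_sq, sum_add_distrib, sum_sub_distrib, sum_const, card_univ, nsmul_eq_mul,
      ← mul_sum, ← sum_mul]
    ring
  have hsq : ∀ i j, 0 ≤ (f i - f j) ^ 2 := fun _ _ ↦ sq_nonneg _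
  rw [← sub_eq_zero, ← neg_eq_zero, neg_sub, ← mul_eq_zero_iff_left two_ne_zero, ← key,
    Fintype.sum_eq_zero_iff_of_nonneg fun i ↦ sum_nonneg fun j _ ↦ hsq i j]
  refine funext_iff.trans <| forall_congr' fun i ↦ ?_
  simp [sum_eq_zero_iff_of_nonneg fun j _ ↦ hsq i j, sub_eq_zero]

lemma sum_sq_eq_sq_sum_iff_of_nonneg {g : ι → ℝ} (hg : ∀ i, 0 ≤ g i) :
    ∑ i, g i ^ 2 = (∑ i, g i) ^ 2 ↔ ∀ i j, 0 < g i → 0 < g j → i = j := by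
  have key : (∑ i, g i) ^ 2 - ∑ i, g i ^ 2 = ∑ i, ∑ j ∈ univ.erase i, g i * g j := by
    rw [sq, sum_mul_sum, ← sum_sub_distrib]
    refine sum_congr rfl fun i _ ↦ ?_
    rw [← add_sum_erase _ _ (mem_univ i)]
    ring
  have hnn : ∀ i, ∀ j ∈ univ.erase i, 0 ≤ g i * g j := fun i j _ ↦ mul_nonneg (hg i) (hg j)
  rw [eq_comm, ← sub_eq_zero, key, sum_eq_zero_iff_of_nonneg fun i _ ↦ sum_nonneg (hnn i)]
  simp only [sum_eq_zero_iff_of_nonneg (hnn _), mem_univ, mem_erase, true_implies]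
  constructor
  · intro h i j hi hj
    by_contra hij
    exact (mul_pos hi hj).ne' (h i j ⟨Ne.symm hij, trivial⟩)
  · intro h i j ⟨hji, _⟩
    by_contra hne
    obtain ⟨hi, hj⟩ := mul_ne_zero_iff.1 hne
    exact hji (h i j ((hg i).lt_of_ne' hi) ((hg j).lt_of_ne' hj)).symm

lemma sq_sum_abs_sub_two_mul_sum_sq {f : ι → ℝ} (hf : ∑ i, f i = 0) :
    (∑ i, |f i|) ^ 2 - 2 * ∑ i, f i ^ 2 =
      2 * ((∑ i, (f i)⁺) ^ 2 - ∑ i, (f i)⁺ ^ 2) + 2 * ((∑ i, (f i)⁻) ^ 2 - ∑ i, (f i)⁻ ^ 2) := by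
  have hsq (x : ℝ) : x ^ 2 = x⁺ ^ 2 + x⁻ ^ 2 := by
    rcases le_total 0 x with h | h
    · simp [posPart_eq_self.2 h, negPart_eq_zero.2 h]
    · simp [posPart_eq_zero.2 h, negPart_eq_neg.2 h]
  have hPN : ∑ i, (f i)⁺ = ∑ i, (f i)⁻ := by
    rw [← sub_eq_zero, ← sum_sub_distrib]
    simpa only [posPart_sub_negPart] using hf
  have habs : ∑ i, |f i| = ∑ i, (f i)⁺ + ∑ i, (f i)⁻ := by
    simp only [← sum_add_distrib, posPart_add_negPart]
  rw [habs, sum_congr rfl fun i _ ↦ hsq (f i), sum_add_distrib, ← hPN]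
  ring

lemma two_mul_sum_sq_le_sq_sum_abs {f : ι → ℝ} (hf : ∑ i, f i = 0) :
    2 * ∑ i, f i ^ 2 ≤ (∑ i, |f i|) ^ 2 := by
  have := sq_sum_abs_sub_two_mul_sum_sq hf
  have h₁ := sum_sq_le_sq_sum_of_nonneg (s := univ) fun i _ ↦ posPart_nonneg (f i)
  have h₂ := sum_sq_le_sq_sum_of_nonneg (s := univ) fun i _ ↦ negPart_nonneg (f i)
  linarith

lemma two_mul_sum_sq_eq_sq_sum_abs_iff {f : ι → ℝ} (hf : ∑ i, f i = 0) :
    2 * ∑ i, f i ^ 2 = (∑ i, |f i|) ^ 2 ↔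
      (∀ p q, 0 < f p → 0 < f q → p = q) ∧ (∀ p q, f p < 0 → f q < 0 → p = q) := by
  have := sq_sum_abs_sub_two_mul_sum_sq hf
  have h₁ := sum_sq_le_sq_sum_of_nonneg (s := univ) fun i _ ↦ posPart_nonneg (f i)
  have h₂ := sum_sq_le_sq_sum_of_nonneg (s := univ) fun i _ ↦ negPart_nonneg (f i)
  have hpos := sum_sq_eq_sq_sum_iff_of_nonneg fun i ↦ posPart_nonneg (f i)
  have hneg := sum_sq_eq_sq_sum_iff_of_nonneg fun i ↦ negPart_nonneg (f i)
  simp only [posPart_pos_iff, negPart_pos_iff] at hpos hneg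
  rw [← hpos, ← hneg]
  constructor
  · intro h
    constructor <;> linarith
  · rintro ⟨h₃, h₄⟩
    linarith

end Finset

namespace Matrix

lemma vecMulVec_sqrt_self_eq_diagonal {ι : Type*} [DecidableEq ι] {g : ι → ℝ}
    (hg : ∀ i j, 0 < g i → 0 < g j → i = j) (hg₀ : ∀ i, 0 ≤ g i) :
    vecMulVec (fun i ↦ √(g i)) (fun i ↦ √(g i)) = diagonal g := by
  ext i j
  rcases eq_or_ne i j with rfl | hij
  · simp [vecMulVec_apply, Real.mul_self_sqrt (hg₀ i)]
  · have : g i = 0 ∨ g j = 0 := by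
      by_contra! h
      exact hij (hg i j ((hg₀ i).lt_of_ne' h.1) ((hg₀ j).lt_of_ne' h.2))
    rcases this with h | h <;> simp [vecMulVec_apply, h, hij]

variable {m : Type*} [Fintype m]

lemma dotProduct_mulVec_vecMulVec_sub_vecMulVec (a b z : m → ℝ) :
    z ⬝ᵥ (vecMulVec a a - vecMulVec b b) *ᵥ z = (a ⬝ᵥ z) ^ 2 - (b ⬝ᵥ z) ^ 2 := by
  simp [sub_mulVec, vecMulVec_mulVec, dotProduct_comm z, sq]

lemma exists_sq_dotProduct_lt_of_orthonormal_eigenvectors {A : Matrix m m ℝ} {x y : m → ℝ}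
    (hx : x ⬝ᵥ x = 1) (hxy : x ⬝ᵥ y = 0) (hy : y ⬝ᵥ y = 1) {a b : ℝ}
    (hAx : A *ᵥ x = a • x) (hAy : A *ᵥ y = b • y) (ha : 0 < a) (hb : 0 < b) (u : m → ℝ) :
    ∃ z, (u ⬝ᵥ z) ^ 2 < z ⬝ᵥ A *ᵥ z := by
  have quad : ∀ s t : ℝ, (s • x + t • y) ⬝ᵥ A *ᵥ (s • x + t • y) = s ^ 2 * a + t ^ 2 * b := by
    intro s t
    simp only [mulVec_add, mulVec_smul, hAx, hAy, add_dotProduct, dotProduct_add, smul_dotProduct,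
      dotProduct_smul, hx, hy, hxy, dotProduct_comm y x, smul_eq_mul]
    ring
  -- the form is positive definite on `span {x, y}`, which contains a nonzero vector `⟂ u`
  by_contra! h
  have hux : u ⬝ᵥ x = 0 := by
    have h₁ := h ((u ⬝ᵥ y) • x + (-(u ⬝ᵥ x)) • y)
    rw [quad, dotProduct_add, dotProduct_smul, dotProduct_smul, smul_eq_mul, smul_eq_mul] at h₁
    have : (u ⬝ᵥ x) ^ 2 * b ≤ 0 := by nlinarith [mul_nonneg (sq_nonneg (u ⬝ᵥ y)) ha.le]
    exact pow_eq_zero_iff two_ne_zero |>.1 <| le_antisymm (nonpos_of_mul_nonpos_left this hb)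
      (sq_nonneg _)
  have h₂ := h ((1 : ℝ) • x + (0 : ℝ) • y)
  rw [quad, zero_smul, add_zero, one_smul, hux] at h₂
  linarith

lemma exists_bipartition_of_eq_vecMulVec_sub_vecMulVec {M : Matrix m m ℝ}
    {a b : m → ℝ} (hM : M = vecMulVec a a - vecMulVec b b) (hdiag : ∀ i, M i i = 0)
    (hrow : ∀ i, ∃ j, M i j ≠ 0) :
    ∃ A : Finset m, ∀ i j, M i j ≠ 0 ↔ (i ∈ A ∧ j ∉ A ∨ i ∉ A ∧ j ∈ A) := by
  have hM' (i j : m) : M i j = a i * a j - b i * b j := by simp [hM, vecMulVec_apply]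
  have hb (i : m) : b i = a i ∨ b i = -a i := by
    have := hdiag i
    rw [hM'] at this
    exact sq_eq_sq_iff_eq_or_eq_neg.1 (by linarith)
  have ha (i : m) : a i ≠ 0 := by
    intro hai
    obtain ⟨j, hj⟩ := hrow i
    rcases hb i with h | h <;> simp [hM', h, hai] at hj
  have hna (i : m) : -a i ≠ a i := fun h ↦ ha i (by linarith)
  refine ⟨Finset.univ.filter fun i ↦ b i = a i, fun i j ↦ ?_⟩
  simp only [Finset.mem_filter, Finset.mem_univ, true_and, hM']
  rcases hb i with hi | hi <;> rcases hb j with hj | hj <;> simp [hi, hj, ha i, ha j, hna i, hna j]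

namespace IsHermitian

variable [DecidableEq m] {A : Matrix m m ℝ}

lemma mul_self_eq_conjStarAlgAut (hA : A.IsHermitian) :
    A * A = conjStarAlgAut ℝ _ hA.eigenvectorUnitary (diagonal fun i ↦ hA.eigenvalues i ^ 2) := by
  conv_lhs => rw [hA.spectral_theorem, ← map_mul]
  simp [sq]

lemma trace_mul_self_eq_sum_sq_eigenvalues (hA : A.IsHermitian) :
    (A * A).trace = ∑ i, hA.eigenvalues i ^ 2 := by
  rw [hA.mul_self_eq_conjStarAlgAut, conjStarAlgAut_apply, trace_mul_cycle, coe_star_mul_self,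
    one_mul, trace_diagonal]

lemma eigenvectorBasis_ne_zero (hA : A.IsHermitian) (i : m) : ⇑(hA.eigenvectorBasis i) ≠ 0 :=
  (WithLp.ofLp_eq_zero 2).ne.2 <| hA.eigenvectorBasis.orthonormal.ne_zero i

lemma mul_self_eq_smul_one_iff (hA : A.IsHermitian) (c : ℝ) :
    A * A = c • 1 ↔ ∀ i, hA.eigenvalues i ^ 2 = c := by
  constructor
  · intro h i
    refine smul_left_injective ℝ (hA.eigenvectorBasis_ne_zero i) ?_
    have := congr($h *ᵥ ⇑(hA.eigenvectorBasis i))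
    rwa [← mulVec_mulVec, mulVec_eigenvectorBasis, mulVec_smul, mulVec_eigenvectorBasis, smul_smul,
      smul_mulVec, one_mulVec, ← sq] at this
  · intro h
    rw [hA.mul_self_eq_conjStarAlgAut, funext h, ← smul_one_eq_diagonal, map_smul, map_one]

lemma dotProduct_eigenvectorBasis (hA : A.IsHermitian) (i j : m) :
    ⇑(hA.eigenvectorBasis i) ⬝ᵥ ⇑(hA.eigenvectorBasis j) = if i = j then 1 else 0 := by
  rw [← orthonormal_iff_ite.1 hA.eigenvectorBasis.orthonormal i j,
    EuclideanSpace.inner_eq_star_dotProduct, dotProduct_comm]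
  rfl

lemma eq_mul_diagonal_mul_transpose (hA : A.IsHermitian) :
    A = (hA.eigenvectorUnitary : Matrix m m ℝ) * diagonal hA.eigenvalues *
      (hA.eigenvectorUnitary : Matrix m m ℝ)ᵀ := by
  conv_lhs => rw [hA.spectral_theorem]
  simp [conjStarAlgAut_apply, star_eq_conjTranspose]

theorem exists_eq_vecMulVec_sub_vecMulVec_iff (hA : A.IsHermitian) :
    (∃ a b : m → ℝ, A = vecMulVec a a - vecMulVec b b) ↔
      (∀ p q, 0 < hA.eigenvalues p → 0 < hA.eigenvalues q → p = q) ∧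
      (∀ p q, hA.eigenvalues p < 0 → hA.eigenvalues q < 0 → p = q) := by
  have two_eigenvectors {B : Matrix m m ℝ} {p q : m} (hpq : p ≠ q) {s t : ℝ}
      (hBp : B *ᵥ ⇑(hA.eigenvectorBasis p) = s • ⇑(hA.eigenvectorBasis p))
      (hBq : B *ᵥ ⇑(hA.eigenvectorBasis q) = t • ⇑(hA.eigenvectorBasis q)) (hs : 0 < s)
      (ht : 0 < t) (u : m → ℝ) : ∃ z, (u ⬝ᵥ z) ^ 2 < z ⬝ᵥ B *ᵥ z :=
    exists_sq_dotProduct_lt_of_orthonormal_eigenvectors (by simp [dotProduct_eigenvectorBasis])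
      (by simp [dotProduct_eigenvectorBasis, hpq]) (by simp [dotProduct_eigenvectorBasis])
      hBp hBq hs ht u
  constructor
  · rintro ⟨a, b, hAab⟩
    refine ⟨fun p q hp hq ↦ ?_, fun p q hp hq ↦ ?_⟩ <;> by_contra hpq
    · obtain ⟨z, hz⟩ := two_eigenvectors hpq (hA.mulVec_eigenvectorBasis p)
        (hA.mulVec_eigenvectorBasis q) hp hq a
      rw [hAab, dotProduct_mulVec_vecMulVec_sub_vecMulVec] at hz
      nlinarith [sq_nonneg (b ⬝ᵥ z)]
    · obtain ⟨z, hz⟩ := two_eigenvectors (B := -A) hpq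
        (by rw [neg_mulVec, hA.mulVec_eigenvectorBasis, neg_smul])
        (by rw [neg_mulVec, hA.mulVec_eigenvectorBasis, neg_smul]) (neg_pos.2 hp) (neg_pos.2 hq) b
      rw [neg_mulVec, dotProduct_neg, hAab, dotProduct_mulVec_vecMulVec_sub_vecMulVec] at hz
      nlinarith [sq_nonneg (a ⬝ᵥ z)]
  · rintro ⟨hpos, hneg⟩
    set U := (hA.eigenvectorUnitary : Matrix m m ℝ)
    have hdiag : diagonal hA.eigenvalues =
        vecMulVec (fun i ↦ √(hA.eigenvalues i)⁺) (fun i ↦ √(hA.eigenvalues i)⁺) -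
          vecMulVec (fun i ↦ √(hA.eigenvalues i)⁻) (fun i ↦ √(hA.eigenvalues i)⁻) := by
      rw [vecMulVec_sqrt_self_eq_diagonal (by simpa using hpos) (fun _ ↦ posPart_nonneg _),
        vecMulVec_sqrt_self_eq_diagonal (by simpa using hneg) (fun _ ↦ negPart_nonneg _),
        diagonal_sub]
      simp
    refine ⟨U *ᵥ fun i ↦ √(hA.eigenvalues i)⁺, U *ᵥ fun i ↦ √(hA.eigenvalues i)⁻, ?_⟩
    refine hA.eq_mul_diagonal_mul_transpose.trans ?_
    rw [hdiag]
    simp [U, mul_sub, sub_mul, mul_vecMulVec, vecMulVec_mul, vecMul_transpose]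

end IsHermitian

end Matrix

namespace SimpleGraph

variable {V : Type*} [Fintype V] (G : SimpleGraph V)

lemma somborMatrix_apply_self (i : V) : somborMatrix G i i = 0 := by
  simp [somborMatrix]

lemma somborMatrix_comm (i j : V) : somborMatrix G j i = somborMatrix G i j := by
  simpa using (somborMatrix_isHermitian G).apply i j

lemma somborMatrix_nonneg (i j : V) : 0 ≤ somborMatrix G i j := by
  unfold somborMatrix
  split_ifs <;> positivity

lemma somborMatrix_pos_iff {i j : V} : 0 < somborMatrix G i j ↔ G.Adj i j := by
  refine ⟨fun h ↦ by_contra fun hij ↦ by simp [somborMatrix, hij] at h, fun hij ↦ ?_⟩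
  have : (0 : ℝ) < G.degree i := mod_cast hij.degree_pos_left
  simp only [somborMatrix, if_pos hij]
  positivity

lemma somborMatrix_ne_zero_iff {i j : V} : somborMatrix G i j ≠ 0 ↔ G.Adj i j := by
  rw [← somborMatrix_pos_iff, (somborMatrix_nonneg G i j).lt_iff_ne']

lemma somborMatrix_mul_self_apply_self (i : V) :
    (somborMatrix G * somborMatrix G) i i =
      ∑ j ∈ G.neighborFinset i, ((G.degree i : ℝ) ^ 2 + (G.degree j : ℝ) ^ 2) := by
  simp only [mul_apply, neighborFinset_eq_filter, Finset.sum_filter]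
  refine Finset.sum_congr rfl fun j _ ↦ ?_
  rw [somborMatrix_comm G i j, ← sq]
  unfold somborMatrix
  split_ifs <;> simp [Real.sq_sqrt, add_nonneg, sq_nonneg]

lemma somborMatrix_mul_self_pos_iff (i k : V) :
    0 < (somborMatrix G * somborMatrix G) i k ↔ ∃ j, G.Adj i j ∧ G.Adj j k := by
  simp only [mul_apply, Finset.sum_pos_iff_of_nonneg fun j _ ↦
    mul_nonneg (somborMatrix_nonneg G i j) (somborMatrix_nonneg G j k), Finset.mem_univ, true_and]
  refine exists_congr fun j ↦ ?_
  rw [← somborMatrix_pos_iff, ← somborMatrix_pos_iff]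
  exact ⟨fun h ↦ (pos_and_pos_or_neg_and_neg_of_mul_pos h).resolve_right
    fun h' ↦ (somborMatrix_nonneg G i j).not_gt h'.1, fun h ↦ mul_pos h.1 h.2⟩

lemma sum_sum_neighborFinset (f : V → ℝ) :
    ∑ i, ∑ j ∈ G.neighborFinset i, f j = ∑ j, G.degree j * f j := by
  simp only [neighborFinset_eq_filter, Finset.sum_filter]
  rw [Finset.sum_comm]
  simp [adj_comm, ← Finset.sum_filter, ← neighborFinset_eq_filter, Finset.sum_const]

lemma sum_somborEigs : ∑ i, somborEigs G i = 0 := by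
  simpa [trace, somborEigs, somborMatrix_apply_self] using
    (somborMatrix_isHermitian G).trace_eq_sum_eigenvalues.symm

lemma sum_sq_somborEigs : ∑ i, somborEigs G i ^ 2 = 2 * forgottenIndex G := by
  rw [somborEigs, ← (somborMatrix_isHermitian G).trace_mul_self_eq_sum_sq_eigenvalues, trace]
  simp only [diag, somborMatrix_mul_self_apply_self, Finset.sum_add_distrib, Finset.sum_const,
    card_neighborFinset_eq_degree, nsmul_eq_mul, sum_sum_neighborFinset, forgottenIndex]
  simp only [← pow_succ']
  ring

theorem exists_somborMatrix_mul_self_eq_smul_one_iff :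
    (∃ c : ℝ, somborMatrix G * somborMatrix G = c • 1) ↔ G = ⊥ ∨ ∀ v, G.degree v = 1 := by
  constructor
  · rintro ⟨c, hc⟩
    have hS (i k : V) : (somborMatrix G * somborMatrix G) i k = if i = k then c else 0 := by
      simp [hc, one_apply]
    refine or_iff_not_imp_left.2 fun hG u ↦ ?_
    obtain ⟨v, w, hvw⟩ := ne_bot_iff_exists_adj.1 hG
    have hc₀ : 0 < c := by
      simpa [hS] using (somborMatrix_mul_self_pos_iff G v v).2 ⟨w, hvw, hvw.symm⟩
    obtain ⟨x, hux, -⟩ := (somborMatrix_mul_self_pos_iff G u u).1 (by simpa [hS] using hc₀)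
    rw [← card_neighborFinset_eq_degree, Finset.card_eq_one]
    refine ⟨x, Finset.eq_singleton_iff_unique_mem.2 ⟨(mem_neighborFinset ..).2 hux, fun y hy ↦ ?_⟩⟩
    by_contra hyx
    have := (somborMatrix_mul_self_pos_iff G y x).2 ⟨u, ((mem_neighborFinset ..).1 hy).symm, hux⟩
    simp [hS, hyx] at this
  · rintro (rfl | hdeg)
    · exact ⟨0, by ext i j; simp [somborMatrix, mul_apply]⟩
    refine ⟨2, ext fun i k ↦ ?_⟩
    rcases eq_or_ne i k with rfl | hik
    · simp [somborMatrix_mul_self_apply_self, hdeg]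
      norm_num
    have hnot : ¬ 0 < (somborMatrix G * somborMatrix G) i k := by
      rw [somborMatrix_mul_self_pos_iff]
      rintro ⟨j, hij, hjk⟩
      have : (G.neighborFinset j).card ≤ 1 := by rw [card_neighborFinset_eq_degree, hdeg]
      exact hik (Finset.card_le_one.1 this i ((mem_neighborFinset ..).2 hij.symm) k
        ((mem_neighborFinset ..).2 hjk))
    have hnn : 0 ≤ (somborMatrix G * somborMatrix G) i k :=
      Finset.sum_nonneg fun j _ ↦ mul_nonneg (somborMatrix_nonneg G i j) (somborMatrix_nonneg G j k)
    simp [le_antisymm (not_lt.1 hnot) hnn, hik]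

lemma exists_somborMatrix_eq_vecMulVec_sub_vecMulVec {A : Finset V}
    (hA : ∀ i j, G.Adj i j ↔ (i ∈ A ∧ j ∉ A ∨ i ∉ A ∧ j ∈ A)) :
    ∃ a b : V → ℝ, somborMatrix G = vecMulVec a a - vecMulVec b b := by
  have hdeg (i : V) : G.degree i = if i ∈ A then Aᶜ.card else A.card := by
    rw [← card_neighborFinset_eq_degree]
    split_ifs with hi <;> congr 1 <;> ext j <;> simp [hA, hi]
  set w := √((A.card : ℝ) ^ 2 + (Aᶜ.card : ℝ) ^ 2)
  have hS (i j : V) : somborMatrix G i j = if G.Adj i j then w else 0 := by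
    unfold somborMatrix
    split_ifs with h
    · rcases (hA i j).1 h with ⟨hi, hj⟩ | ⟨hi, hj⟩ <;> simp [hdeg, hi, hj, w, add_comm]
    · rfl
  obtain ⟨r, hr⟩ : ∃ r : ℝ, r * r = w / 2 := ⟨_, Real.mul_self_sqrt (by positivity)⟩
  refine ⟨fun _ ↦ r, fun i ↦ if i ∈ A then r else -r, ?_⟩
  ext i j
  rw [hS, hA]
  by_cases hi : i ∈ A <;> by_cases hj : j ∈ A <;> simp [vecMulVec_apply, hi, hj] <;> linarith

lemma forgottenIndex_nonneg : 0 ≤ forgottenIndex G :=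
  Finset.sum_nonneg fun _ _ ↦ by positivity

lemma somborEnergy_nonneg : 0 ≤ somborEnergy G :=
  Finset.sum_nonneg fun _ _ ↦ abs_nonneg _

lemma sum_sq_abs_somborEigs : ∑ i, |somborEigs G i| ^ 2 = 2 * forgottenIndex G := by
  simp only [sq_abs, sum_sq_somborEigs]

lemma two_mul_sqrt_forgottenIndex_le_somborEnergy :
    2 * √(forgottenIndex G) ≤ somborEnergy G := by
  rw [← sq_le_sq₀ (by positivity) (somborEnergy_nonneg G), mul_pow,
    Real.sq_sqrt (forgottenIndex_nonneg G)]
  have := Finset.two_mul_sum_sq_le_sq_sum_abs (sum_somborEigs G)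
  rw [sum_sq_somborEigs] at this
  unfold somborEnergy
  linarith

lemma somborEnergy_le_sqrt : somborEnergy G ≤ √(2 * Fintype.card V * forgottenIndex G) := by
  rw [Real.le_sqrt (somborEnergy_nonneg G) (by positivity [forgottenIndex_nonneg G])]
  have := sq_sum_le_card_mul_sum_sq (s := Finset.univ) (f := fun i ↦ |somborEigs G i|)
  rw [sum_sq_abs_somborEigs, Finset.card_univ] at this
  unfold somborEnergy
  linarith

theorem somborEnergy_eq_sqrt_iff [Nonempty V] :
    somborEnergy G = √(2 * Fintype.card V * forgottenIndex G) ↔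
      G = ⊥ ∨ ∀ v, G.degree v = 1 := by
  rw [eq_comm, Real.sqrt_eq_iff_eq_sq (by positivity [forgottenIndex_nonneg G])
    (somborEnergy_nonneg G), ← exists_somborMatrix_mul_self_eq_smul_one_iff]
  have hCS : 2 * Fintype.card V * forgottenIndex G = somborEnergy G ^ 2 ↔
      ∀ i j, |somborEigs G i| = |somborEigs G j| := by
    rw [← Finset.sq_sum_eq_card_mul_sum_sq_iff, sum_sq_abs_somborEigs, somborEnergy]
    constructor <;> intro h <;> linarith
  simp only [hCS, (somborMatrix_isHermitian G).mul_self_eq_smul_one_iff,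
    ← sq_eq_sq_iff_abs_eq_abs]
  obtain ⟨i₀⟩ := ‹Nonempty V›
  exact ⟨fun h ↦ ⟨_, fun i ↦ h i i₀⟩, fun ⟨c, hc⟩ i j ↦ (hc i).trans (hc j).symm⟩

theorem two_mul_sqrt_forgottenIndex_eq_somborEnergy_iff (hG : ∀ v, ∃ w, G.Adj v w) :
    2 * √(forgottenIndex G) = somborEnergy G ↔
      ∃ A : Finset V, ∀ i j, G.Adj i j ↔ (i ∈ A ∧ j ∉ A ∨ i ∉ A ∧ j ∈ A) := by
  have hspec := Finset.two_mul_sum_sq_eq_sq_sum_abs_iff (sum_somborEigs G)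
  rw [sum_sq_somborEigs, somborEigs,
    ← (somborMatrix_isHermitian G).exists_eq_vecMulVec_sub_vecMulVec_iff] at hspec
  rw [← sq_eq_sq₀ (by positivity) (somborEnergy_nonneg G), mul_pow,
    Real.sq_sqrt (forgottenIndex_nonneg G), show (2 : ℝ) ^ 2 = 2 * 2 by norm_num, mul_assoc]
  refine hspec.trans ⟨?_, ?_⟩
  · rintro ⟨a, b, hab⟩
    obtain ⟨A, hA⟩ := exists_bipartition_of_eq_vecMulVec_sub_vecMulVec hab
      (somborMatrix_apply_self G) fun i ↦ (hG i).imp fun _ ↦ (somborMatrix_ne_zero_iff G).2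
    exact ⟨A, fun i j ↦ (somborMatrix_ne_zero_iff G).symm.trans (hA i j)⟩
  · rintro ⟨A, hA⟩
    exact exists_somborMatrix_eq_vecMulVec_sub_vecMulVec G hA

end SimpleGraph

theorem stmt11 {n : ℕ} (hn : 3 ≤ n) (G : SimpleGraph (Fin n)) :
    (2 * Real.sqrt (forgottenIndex G) ≤ somborEnergy G ∧
      somborEnergy G ≤ Real.sqrt (2 * n * forgottenIndex G)) ∧
    (somborEnergy G = Real.sqrt (2 * n * forgottenIndex G) ↔
      G = ⊥ ∨ ∀ v, G.degree v = 1) ∧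
    (G.Connected →
      (2 * Real.sqrt (forgottenIndex G) = somborEnergy G ↔
        ∃ A : Finset (Fin n), ∀ i j,
          G.Adj i j ↔ ((i ∈ A ∧ j ∉ A) ∨ (i ∉ A ∧ j ∈ A)))) := by
  have : Nontrivial (Fin n) := Fin.nontrivial_iff_two_le.2 (by omega)
  refine ⟨⟨G.two_mul_sqrt_forgottenIndex_le_somborEnergy, ?_⟩, ?_, fun hG ↦
    G.two_mul_sqrt_forgottenIndex_eq_somborEnergy_iff hG.preconnected.exists_adj_of_nontrivial⟩
  · simpa using G.somborEnergy_le_sqrt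
  · simpa using G.somborEnergy_eq_sqrt_iff
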